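/- For n \ge 4 and m = 2^{n-1}, the closed formula gives ex_{Q_{n,2}}(2^{n-1}) = (n-1)2^{n-1} + 2 \cdot 2^{n-1} - 2^{n-1} = n \cdot 2^{n-1}, and more generally ex_{Q_{n,2}}(m) \le (t+1)m for all 1 \le m \le 2^t with 0 \le t \le n. -/

import Mathlib

/-- Closed-form hypercube edge-isoperimetric function: for `m` with binary expansion
`m = 2^{t_0} + ... + 2^{t_s}` with `t_0 > ... > t_s`, this equals
`∑ t_i 2^{t_i} + ∑ 2 i 2^{t_i}`. -/
def ex : ℕ → ℕ
  | 0 => 0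
  | (m+1) =>
      Nat.log2 (m+1) * 2 ^ Nat.log2 (m+1) + 2 * ((m+1) - 2 ^ Nat.log2 (m+1))
        + ex ((m+1) - 2 ^ Nat.log2 (m+1))
decreasing_by
  exact Nat.sub_lt (Nat.succ_pos m) (Nat.two_pow_pos _)

/-- The full closed formula of Lemma 2 for `ex_m(Q_{n,2})`, `1 ≤ m ≤ 2^n`:
`ex m + ⌊m/2^{n-1}⌋·2^{n-1} + 2·[m - ⌊m/2^{n-1}⌋·2^{n-1} - 2^{n-2}]⁺`. -/
def exQ (n m : ℕ) : ℤ :=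
  (ex m : ℤ) + (m / 2 ^ (n-1) : ℕ) * 2 ^ (n-1)
    + 2 * max ((m : ℤ) - (m / 2 ^ (n-1) : ℕ) * 2 ^ (n-1) - 2 ^ (n-2)) 0

/-!
`ex` satisfies `ex (2^t + r) = t·2^t + 2r + ex r` for `r < 2^t`, from which `ex m ≤ t·m` for
`m ≤ 2^t` follows by induction on `t`. The correction terms of `exQ n m` add at most `m` to
`ex m`: writing `m = q·2^(n-1) + r` with `r < 2^(n-1) ≤ 2·2^(n-2)`, one has
`2·(r - 2^(n-2))⁺ ≤ r`.
-/

lemma ex_two_pow_add {t r : ℕ} (hr : r < 2 ^ t) : ex (2 ^ t + r) = t * 2 ^ t + 2 * r + ex r := by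
  have hlog : Nat.log2 (2 ^ t + r) = t := by
    rw [Nat.log2_eq_log_two]
    exact Nat.log_eq_of_pow_le_of_lt_pow (by omega) (by rw [pow_succ]; omega)
  obtain ⟨m, hm⟩ : ∃ m, 2 ^ t + r = m + 1 := ⟨2 ^ t + r - 1, by have := Nat.two_pow_pos t; omega⟩
  rw [hm, ex, ← hm, hlog, Nat.add_sub_cancel_left]

lemma ex_two_pow (t : ℕ) : ex (2 ^ t) = t * 2 ^ t := by
  simpa [ex] using ex_two_pow_add (Nat.two_pow_pos t)

lemma ex_le_mul {t m : ℕ} (hm : m ≤ 2 ^ t) : ex m ≤ t * m := by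
  induction t generalizing m with
  | zero =>
    interval_cases m
    · simp [ex]
    · simpa using (ex_two_pow 0).le
  | succ t ih =>
    rcases lt_trichotomy m (2 ^ t) with hlt | rfl | hgt
    · exact (ih hlt.le).trans (Nat.mul_le_mul_right m t.le_succ)
    · rw [ex_two_pow]; exact Nat.mul_le_mul_right _ t.le_succ
    · obtain ⟨r, rfl⟩ := Nat.exists_eq_add_of_le hgt.le
      rw [pow_succ] at hm
      rcases Nat.lt_or_ge r (2 ^ t) with hr | hr
      · rw [ex_two_pow_add hr]
        have := ih hr.le
        nlinarith
      · have hr : 2 ^ t + r = 2 ^ (t + 1) := by rw [pow_succ]; omega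
        rw [hr, ex_two_pow]

lemma exQ_le_ex_add (n m : ℕ) : exQ n m ≤ ex m + m := by
  have hdiv := Nat.div_add_mod' m (2 ^ (n - 1))
  have hmod := Nat.mod_lt m (Nat.two_pow_pos (n - 1))
  have hhalf : 2 ^ (n - 1) ≤ 2 * 2 ^ (n - 2) := by
    rw [← pow_succ']; exact Nat.pow_le_pow_right two_pos (by omega)
  unfold exQ
  generalize m / 2 ^ (n - 1) = q at hdiv ⊢
  generalize m % 2 ^ (n - 1) = r at hdiv hmod
  zify at hdiv hmod hhalf
  omega

lemma exQ_two_pow_pred {n : ℕ} (hn : 1 ≤ n) : exQ n (2 ^ (n - 1)) = n * 2 ^ (n - 1) := by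
  obtain ⟨k, rfl⟩ := Nat.exists_eq_add_of_le' hn
  have hpos : (0 : ℤ) < 2 ^ (k - 1) := by positivity
  simp only [exQ, Nat.add_sub_cancel, Nat.div_self (Nat.two_pow_pos k), ex_two_pow]
  push_cast
  rw [max_eq_right (by linarith)]
  ring

/-- Lemma 3 (second part), specialized to `Q_{n,2}` via the closed formula: for `n ≥ 4`,
`ex_{Q_{n,2}}(2^{n-1}) = n·2^{n-1}`, and `ex_{Q_{n,2}}(m) ≤ (t+1) m` for all
`1 ≤ m ≤ 2^t` with `0 ≤ t ≤ n`. -/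
theorem exQ_bound (n : ℕ) (hn : 4 ≤ n) :
    exQ n (2 ^ (n-1)) = (n : ℤ) * 2 ^ (n-1) ∧
    ∀ t m : ℕ, t ≤ n → 1 ≤ m → m ≤ 2 ^ t → exQ n m ≤ ((t : ℤ) + 1) * m := by
  refine ⟨exQ_two_pow_pred (by omega), fun t m _ _ hm => ?_⟩
  have hex : (ex m : ℤ) ≤ t * m := by exact_mod_cast ex_le_mul hm
  linarith [exQ_le_ex_add n m]
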